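/- For every natural number n, the number of partitions of n equals Σ_{n₀ + 2n₁ = n} |SP(n₀)| · |P(n₁)|, where the sum runs over all pairs of natural numbers (n₀, n₁) with n₀ + 2n₁ = n, SP(n₀) is the set of strict partitions of n₀, and P(n₁) is the set of partitions of n₁. Moreover, for each fixed (n₀, n₁), the number of partitions λ of n with |λ^r| = n₀ and |λ^d| = n₁ equals |SP(n₀)| · |P(n₁)|. -/

import Mathlib

/-- `s` is (the multiset of parts of) a partition of `n`: all parts are positive and sum to `n`. -/
def IsPartitionOf (n : ℕ) (s : Multiset ℕ) : Prop :=
  (∀ x ∈ s, 0 < x) ∧ s.sum = n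

/-- `λ^r`: the part `i` occurs once if its multiplicity in `s` is odd, and not at all otherwise. -/
def rPart (s : Multiset ℕ) : Multiset ℕ :=
  s.dedup.filter (fun i => Odd (s.count i))

/-- `λ^d`: the part `i` occurs `⌊m_i(λ)/2⌋` times (i.e. `(m_i-1)/2` if `m_i` odd, `m_i/2` if even). -/
def dPart (s : Multiset ℕ) : Multiset ℕ :=
  ∑ i ∈ s.toFinset, Multiset.replicate (s.count i / 2) i

/-- `λ^o`: the odd parts of `λ`. -/
def oPart (s : Multiset ℕ) : Multiset ℕ :=
  s.filter (fun x => Odd x)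

/-- `λ^e`: the halves of the even parts of `λ`. -/
def ePart (s : Multiset ℕ) : Multiset ℕ :=
  (s.filter (fun x => Even x)).map (fun x => x / 2)

/-- The `p`-Glaisher map: each part `x = p^a * q` (with `p ∤ q`) is replaced by `p^a` copies of `q`. -/
def glaisher (p : ℕ) (s : Multiset ℕ) : Multiset ℕ :=
  s.bind (fun x => Multiset.replicate (p ^ (Nat.factorization x p)) (x / p ^ (Nat.factorization x p)))

/-- `λ^{r(p)}`: the part `i` occurs `m_i(λ) mod p` times. -/
def rPartP (p : ℕ) (s : Multiset ℕ) : Multiset ℕ :=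
  ∑ i ∈ s.toFinset, Multiset.replicate (s.count i % p) i

/-- `λ^{d(p)}`: the part `i` occurs `(m_i(λ) - (m_i(λ) mod p))/p` times. -/
def dPartP (p : ℕ) (s : Multiset ℕ) : Multiset ℕ :=
  ∑ i ∈ s.toFinset, Multiset.replicate (s.count i / p) i

/-!
Writing each multiplicity as `m = (m mod 2) + 2 ⌊m/2⌋` gives `λ = λ^r + 2 λ^d` as multisets of
parts. Conversely, for a strict `σ` and any `τ`, the multiplicities of `σ + 2 τ` have parity given
by `σ`, so `(σ + 2 τ)^r = σ` and `(σ + 2 τ)^d = τ`. Hence `λ ↦ (λ^r, λ^d)` is a bijection between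
partitions of `n₀ + 2 n₁` with `|λ^r| = n₀`, `|λ^d| = n₁` and `SP(n₀) × P(n₁)`; summing over the
fibres of `λ ↦ (|λ^r|, |λ^d|)` gives the first identity.
-/

open Nat (Partition)

lemma count_rPart (s : Multiset ℕ) (i : ℕ) : (rPart s).count i = s.count i % 2 := by
  rw [rPart, Multiset.count_filter, Multiset.count_dedup]
  by_cases h : Odd (s.count i)
  · have hi : i ∈ s := Multiset.count_pos.mp (Nat.pos_of_ne_zero fun h0 => by simp [h0] at h)
    simp [h, hi, Nat.odd_iff.mp h]
  · simp [h, Nat.not_odd_iff.mp h]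

lemma count_dPart (s : Multiset ℕ) (i : ℕ) : (dPart s).count i = s.count i / 2 := by
  rw [dPart, Multiset.count_sum']
  simp only [Multiset.count_replicate, Finset.sum_ite_eq', Multiset.mem_toFinset]
  split_ifs with h
  · rfl
  · rw [Multiset.count_eq_zero.mpr h, Nat.zero_div]

lemma nodup_rPart (s : Multiset ℕ) : (rPart s).Nodup :=
  (Multiset.nodup_dedup s).filter _

lemma mem_of_mem_rPart {i : ℕ} {s : Multiset ℕ} (h : i ∈ rPart s) : i ∈ s :=
  Multiset.mem_dedup.mp (Multiset.mem_of_mem_filter h)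

lemma mem_of_mem_dPart {i : ℕ} {s : Multiset ℕ} (h : i ∈ dPart s) : i ∈ s := by
  rw [← Multiset.count_pos, count_dPart] at h
  exact Multiset.count_pos.mp (by omega)

lemma rPart_add_two_nsmul_dPart (s : Multiset ℕ) : rPart s + 2 • dPart s = s := by
  ext i
  rw [Multiset.count_add, Multiset.count_nsmul, count_rPart, count_dPart]
  omega

lemma rPart_add_two_nsmul {σ : Multiset ℕ} (hσ : σ.Nodup) (τ : Multiset ℕ) :
    rPart (σ + 2 • τ) = σ := by
  ext i
  have := Multiset.nodup_iff_count_le_one.mp hσ i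
  rw [count_rPart, Multiset.count_add, Multiset.count_nsmul]
  omega

lemma dPart_add_two_nsmul {σ : Multiset ℕ} (hσ : σ.Nodup) (τ : Multiset ℕ) :
    dPart (σ + 2 • τ) = τ := by
  ext i
  have := Multiset.nodup_iff_count_le_one.mp hσ i
  rw [count_dPart, Multiset.count_add, Multiset.count_nsmul]
  omega

lemma sum_rPart_add_two_mul_sum_dPart (s : Multiset ℕ) :
    (rPart s).sum + 2 * (dPart s).sum = s.sum := by
  conv_rhs => rw [← rPart_add_two_nsmul_dPart s]
  rw [Multiset.sum_add, Multiset.sum_nsmul, smul_eq_mul]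

def Nat.Partition.addTwoNsmul {a b : ℕ} (σ : Partition a) (τ : Partition b) :
    Partition (a + 2 * b) where
  parts := σ.parts + 2 • τ.parts
  parts_pos {i} hi := by
    rcases Multiset.mem_add.mp hi with hi | hi
    · exact σ.parts_pos hi
    · exact τ.parts_pos (Multiset.mem_of_mem_nsmul hi)
  parts_sum := by
    rw [Multiset.sum_add, Multiset.sum_nsmul, σ.parts_sum, τ.parts_sum, smul_eq_mul]

def rPartDPartEquiv (n₀ n₁ : ℕ) :
    {μ : Partition (n₀ + 2 * n₁) // (rPart μ.parts).sum = n₀ ∧ (dPart μ.parts).sum = n₁} ≃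
      {σ : Partition n₀ // σ.parts.Nodup} × Partition n₁ where
  toFun μ :=
    (⟨⟨rPart μ.1.parts, fun h => μ.1.parts_pos (mem_of_mem_rPart h), μ.2.1⟩, nodup_rPart _⟩,
      ⟨dPart μ.1.parts, fun h => μ.1.parts_pos (mem_of_mem_dPart h), μ.2.2⟩)
  invFun p :=
    ⟨p.1.1.addTwoNsmul p.2, by
      simp only [Nat.Partition.addTwoNsmul, rPart_add_two_nsmul p.1.2,
        dPart_add_two_nsmul p.1.2, Nat.Partition.parts_sum, and_self]⟩
  left_inv μ := Subtype.ext (Nat.Partition.ext (rPart_add_two_nsmul_dPart μ.1.parts))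
  right_inv p := Prod.ext (Subtype.ext (Nat.Partition.ext (rPart_add_two_nsmul p.1.2 _)))
    (Nat.Partition.ext (dPart_add_two_nsmul p.1.2 _))

theorem card_filter_sum_rPart_sum_dPart {n n₀ n₁ : ℕ} (hn : n₀ + 2 * n₁ = n) :
    (Finset.univ.filter (fun μ : Partition n =>
        (rPart μ.parts).sum = n₀ ∧ (dPart μ.parts).sum = n₁)).card =
      (Partition.distincts n₀).card * Fintype.card (Partition n₁) := by
  subst hn
  rw [← Fintype.card_subtype, Fintype.card_congr (rPartDPartEquiv n₀ n₁), Fintype.card_prod,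
    Fintype.card_subtype]
  rfl

/-- `|P(n)| = Σ_{n₀ + 2n₁ = n} |SP(n₀)| ⬝ |P(n₁)|`, and for each fixed `(n₀, n₁)` the number
of `λ ∈ P(n)` with `|λ^r| = n₀` and `|λ^d| = n₁` equals `|SP(n₀)| ⬝ |P(n₁)|`. -/
theorem stmt16 (n : ℕ) :
    (Fintype.card (Nat.Partition n) =
      ∑ q ∈ (Finset.range (n + 1) ×ˢ Finset.range (n + 1)).filter
          (fun q => q.1 + 2 * q.2 = n),
        (Nat.Partition.distincts q.1).card * Fintype.card (Nat.Partition q.2)) ∧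
    (∀ n₀ n₁ : ℕ, n₀ + 2 * n₁ = n →
      (Finset.univ.filter (fun μ : Nat.Partition n =>
          (rPart μ.parts).sum = n₀ ∧ (dPart μ.parts).sum = n₁)).card =
        (Nat.Partition.distincts n₀).card * Fintype.card (Nat.Partition n₁)) := by
  refine ⟨?_, fun n₀ n₁ => card_filter_sum_rPart_sum_dPart⟩
  have maps_to : ∀ μ : Partition n, ((rPart μ.parts).sum, (dPart μ.parts).sum) ∈
      (Finset.range (n + 1) ×ˢ Finset.range (n + 1)).filter (fun q => q.1 + 2 * q.2 = n) := by
    intro μ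
    have := sum_rPart_add_two_mul_sum_dPart μ.parts
    rw [μ.parts_sum] at this
    simp only [Finset.mem_filter, Finset.mem_product, Finset.mem_range]
    omega
  rw [Fintype.card, Finset.card_eq_sum_card_fiberwise fun μ _ => maps_to μ]
  refine Finset.sum_congr rfl fun q hq => ?_
  rw [← card_filter_sum_rPart_sum_dPart (Finset.mem_filter.mp hq).2]
  simp only [Prod.ext_iff]
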